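/- Any set function v : Finset N → ℝ with v(∅) = 0 can be written uniquely as a linear combination of unanimity games: v = ∑_{∅ ≠ C ⊆ N} I(C) · v_C, where v_C(T) = 1 if C ⊆ T else 0 and I(C) is the Harsanyi dividend of v at C. -/

import Mathlib

open Finset

noncomputable def harsanyi {α : Type*} [DecidableEq α] (v : Finset α → ℝ) (S : Finset α) : ℝ :=
  ∑ T ∈ S.powerset, (-1 : ℝ) ^ (S.card - T.card) * v T

/-!
The Harsanyi dividend is the Möbius transform of `v` on the Boolean lattice, whose inverse is
summation over subsets. After exchanging the order of summation, both compositions reduce to an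
alternating sum `∑_{U ⊆ T ⊆ S} ±1` over an interval, which vanishes unless `U = S`. Expanding in
unanimity games is summation over subsets with the empty coalition left out, and that costs
nothing since `v ∅ = 0`.
-/

section
variable {α R : Type*} [DecidableEq α] [Ring R]

theorem Finset.sum_Icc_neg_one_pow_card_sdiff_left (U S : Finset α) :
    ∑ T ∈ Icc U S, (-1 : R) ^ #(T \ U) = if U = S then 1 else 0 := by
  by_cases hUS : U ⊆ S
  · have hinj : Set.InjOn (U ∪ ·) (S \ U).powerset := fun D hD D' hD' h => by
      simp only [coe_powerset, Set.mem_preimage, Set.mem_powerset_iff, coe_subset] at hD hD'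
      rw [← union_sdiff_cancel_left (disjoint_of_subset_right hD disjoint_sdiff),
        ← union_sdiff_cancel_left (disjoint_of_subset_right hD' disjoint_sdiff)]
      exact congrArg (· \ U) h
    rw [Icc_eq_image_powerset hUS, sum_image hinj]
    have halt := congrArg (Int.cast : ℤ → R) (sum_powerset_neg_one_pow_card (x := S \ U))
    push_cast at halt
    rw [sum_congr rfl fun D hD => by
      rw [union_sdiff_cancel_left (disjoint_of_subset_right (mem_powerset.1 hD) disjoint_sdiff)],
      halt]
    have hSU : S \ U = ∅ ↔ U = S := sdiff_eq_empty_iff_subset.trans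
      ⟨subset_antisymm hUS, fun h => h ▸ subset_rfl⟩
    simp only [hSU]
  · rw [Icc_eq_empty (by simpa using hUS), sum_empty, if_neg (by rintro rfl; exact hUS subset_rfl)]

theorem Finset.sum_Icc_neg_one_pow_card_sdiff_right (U S : Finset α) :
    ∑ T ∈ Icc U S, (-1 : R) ^ #(S \ T) = if U = S then 1 else 0 := by
  rw [← sum_Icc_neg_one_pow_card_sdiff_left]
  -- `T ↦ U ∪ S \ T` is an involution of `[U, S]` exchanging `S \ T` and `T \ U`.
  refine sum_nbij' (fun T => U ∪ S \ T) (fun T => U ∪ S \ T) ?_ ?_ ?_ ?_ fun T hT => ?_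
  any_goals simp only [mem_Icc]; grind
  rw [union_sdiff_cancel_left (disjoint_sdiff.mono_left (mem_Icc.1 hT).1)]
end

theorem Finset.sum_Iic_sum_Iic_comm {α M : Type*} [Preorder α] [LocallyFiniteOrder α]
    [LocallyFiniteOrderBot α] [AddCommMonoid M] (a : α) (f : α → α → M) :
    ∑ b ∈ Iic a, ∑ c ∈ Iic b, f c b = ∑ c ∈ Iic a, ∑ b ∈ Icc c a, f c b :=
  sum_comm' fun b c => by
    simp only [mem_Iic, mem_Icc]
    exact ⟨fun h => ⟨⟨h.2, h.1⟩, h.2.trans h.1⟩, fun h => ⟨h.1.2, h.1.1⟩⟩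

section
variable {α : Type*} [DecidableEq α]

theorem harsanyi_eq_sum_Iic (v : Finset α → ℝ) (S : Finset α) :
    harsanyi v S = ∑ T ∈ Iic S, (-1 : ℝ) ^ #(S \ T) * v T := by
  rw [harsanyi, Iic_eq_powerset]
  exact sum_congr rfl fun T hT => by rw [card_sdiff_of_subset (mem_powerset.1 hT)]

theorem harsanyi_empty (v : Finset α → ℝ) : harsanyi v ∅ = v ∅ := by
  simp [harsanyi]

theorem sum_powerset_harsanyi (v : Finset α → ℝ) (S : Finset α) :
    ∑ C ∈ S.powerset, harsanyi v C = v S := by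
  calc ∑ C ∈ S.powerset, harsanyi v C
      = ∑ C ∈ Iic S, ∑ U ∈ Iic C, (-1 : ℝ) ^ #(C \ U) * v U := by
        simp only [harsanyi_eq_sum_Iic, Iic_eq_powerset]
    _ = ∑ U ∈ Iic S, (∑ C ∈ Icc U S, (-1 : ℝ) ^ #(C \ U)) * v U := by
        simp only [sum_Iic_sum_Iic_comm, sum_mul]
    _ = v S := by
        simp [sum_Icc_neg_one_pow_card_sdiff_left]

theorem harsanyi_sum_powerset (f : Finset α → ℝ) (S : Finset α) :
    harsanyi (fun T => ∑ C ∈ T.powerset, f C) S = f S := by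
  calc harsanyi (fun T => ∑ C ∈ T.powerset, f C) S
      = ∑ T ∈ Iic S, ∑ C ∈ Iic T, (-1 : ℝ) ^ #(S \ T) * f C := by
        simp only [harsanyi_eq_sum_Iic, Iic_eq_powerset, mul_sum]
    _ = ∑ C ∈ Iic S, (∑ T ∈ Icc C S, (-1 : ℝ) ^ #(S \ T)) * f C := by
        simp only [sum_Iic_sum_Iic_comm, sum_mul]
    _ = f S := by
        simp [sum_Icc_neg_one_pow_card_sdiff_right]

theorem sum_filter_ne_empty_mul_unanimity {R : Type*} [NonAssocSemiring R] [Fintype α]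
    (c : Finset α → R) (T : Finset α) :
    ∑ C ∈ univ.powerset.filter (fun C => C ≠ ∅), c C * (if C ⊆ T then (1 : R) else 0) =
      ∑ C ∈ T.powerset, Function.update c ∅ 0 C := by
  have hfilter : (univ.powerset.filter fun C => C ≠ ∅).filter (· ⊆ T) = T.powerset.erase ∅ := by
    ext C
    simp
  rw [← sum_erase _ (Function.update_self ∅ 0 c)]
  simp only [mul_boole, ← sum_filter, hfilter]
  exact sum_congr rfl fun C hC => (Function.update_of_ne (ne_of_mem_erase hC) 0 c).symm

end

theorem unanimity_basis {α : Type*} [DecidableEq α] [Fintype α]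
    (v : Finset α → ℝ) (hv : v ∅ = 0) :
    (∀ T : Finset α,
      v T = ∑ C ∈ Finset.univ.powerset.filter (fun C => C ≠ ∅),
        harsanyi v C * (if C ⊆ T then (1 : ℝ) else 0)) ∧
    (∀ c : Finset α → ℝ,
      (∀ T : Finset α,
        v T = ∑ C ∈ Finset.univ.powerset.filter (fun C => C ≠ ∅),
          c C * (if C ⊆ T then (1 : ℝ) else 0)) →
      ∀ C : Finset α, C ≠ ∅ → c C = harsanyi v C) := by
  have hupdate : Function.update (harsanyi v) ∅ 0 = harsanyi v := by
    rw [Function.update_eq_self_iff, harsanyi_empty, hv]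
  refine ⟨fun T => ?_, fun c hc C hC => ?_⟩
  · rw [sum_filter_ne_empty_mul_unanimity, hupdate, sum_powerset_harsanyi]
  · have hv_eq : v = fun T => ∑ D ∈ T.powerset, Function.update c ∅ 0 D :=
      funext fun T => (hc T).trans (sum_filter_ne_empty_mul_unanimity c T)
    rw [hv_eq, harsanyi_sum_powerset, Function.update_of_ne hC]
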